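/- arXiv:2005.01538 — 2 statements merged into one kernel-verified Lean document; each statement's English description precedes it below -/
import Mathlib

section
/- Let H be a real separable Hilbert space, K ⊆ H a compact subset, F : K → H a continuous map, and ε > 0. Then there exist a finite index set, vectors v_i ∈ H, and real-valued functions f_i : K → ℝ, each a finite real linear combination of finite products of functions of the form x ↦ ⟪w, x⟫ with w ∈ H, such that for every x ∈ K, ‖F(x) − Σ_i f_i(x) • v_i‖ < ε. -/
/-!
Cover the compact set `F(K)` by finitely many balls `B(vᵢ, ε/2)` and take a partition of unity
`φᵢ` subordinate to their preimages: `∑ φᵢ(x) • vᵢ` is a convex combination of centres within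
`ε/2` of `F x`, hence lies in the convex ball around `F x`. The coefficients `φᵢ` are then replaced
by polynomials in the functionals `⟪w, ·⟫`, which separate the points of `H` and so are dense in
`C(K, ℝ)` by Stone–Weierstrass; since `(φᵢ)ᵢ ↦ ∑ φᵢ • vᵢ` is continuous into `C(K, H)`, the
strict inequality survives.
-/

open RealInnerProductSpace

namespace ContinuousMap

variable {X E : Type*} [TopologicalSpace X] [NormedAddCommGroup E] [NormedSpace ℝ E]

theorem continuous_smul_const (c : E) : Continuous fun g : C(X, ℝ) => g • const X c :=
  continuous_postcomp ⟨(· • c), continuous_id.smul continuous_const⟩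

variable [CompactSpace X] [T2Space X]

theorem exists_norm_sub_sum_smul_const_lt (F : C(X, E)) {ε : ℝ} (hε : 0 < ε) :
    ∃ (N : ℕ) (φ : Fin N → C(X, ℝ)) (v : Fin N → E),
      ‖F - ∑ i, φ i • const X (v i)‖ < ε := by
  obtain ⟨t, -, ht, hcover⟩ := finite_cover_balls_of_compact (isCompact_range F.continuous)
    (half_pos hε)
  obtain ⟨N, v, rfl⟩ := ht.fin_embedding
  obtain ⟨ρ, hρ⟩ := PartitionOfUnity.exists_isSubordinate isClosed_univ
    (fun i => F ⁻¹' Metric.ball (v i) (ε / 2)) (fun i => Metric.isOpen_ball.preimage F.continuous)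
    (fun x _ => by simpa using hcover (Set.mem_range_self x))
  refine ⟨N, fun i => ⟨ρ i, (ρ i).continuous⟩, v, ?_⟩
  refine (norm_le _ (half_pos hε).le).2 (fun x => ?_) |>.trans_lt (half_lt_self hε)
  have hmem : ∑ᶠ i, ρ i x • v i ∈ Metric.ball (F x) (ε / 2) :=
    ρ.finsum_smul_mem_convex (g := fun i _ => v i) (Set.mem_univ x)
      (fun i hi => Metric.mem_ball_comm.1 (hρ i (subset_closure hi))) (convex_ball _ _)
  rw [finsum_eq_sum_of_fintype, Metric.mem_ball', dist_eq_norm] at hmem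
  simpa [smul_apply'] using hmem.le

theorem exists_sum_smul_const_near_of_dense {S : Set C(X, ℝ)} (hS : Dense S) (F : C(X, E))
    {ε : ℝ} (hε : 0 < ε) :
    ∃ (N : ℕ) (g : Fin N → C(X, ℝ)) (v : Fin N → E), (∀ i, g i ∈ S) ∧
      ‖F - ∑ i, g i • const X (v i)‖ < ε := by
  obtain ⟨N, φ, v, hφ⟩ := exists_norm_sub_sum_smul_const_lt F hε
  have hcont : Continuous fun g : Fin N → C(X, ℝ) => ‖F - ∑ i, g i • const X (v i)‖ :=
    (continuous_const.sub <| continuous_finsetSum _ fun i _ =>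
      (continuous_smul_const (v i)).comp (continuous_apply i)).norm
  obtain ⟨g, hg, hgS⟩ := (dense_pi Set.univ fun _ _ => hS).exists_mem_open
    (isOpen_lt hcont continuous_const) ⟨φ, hφ⟩
  exact ⟨N, g, v, fun i => hg i (Set.mem_univ i), hgS⟩

end ContinuousMap

section InnerPolynomials

variable {H : Type*} [NormedAddCommGroup H] [InnerProductSpace ℝ H]

def innerPolynomials (K : Set H) : Subalgebra ℝ C(K, ℝ) :=
  Algebra.adjoin ℝ {g | ∃ w : H, ∀ x : K, g x = ⟪w, (x : H)⟫}

theorem map_coeFnAlgHom_innerPolynomials (K : Set H) :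
    (innerPolynomials K).map (ContinuousMap.coeFnAlgHom ℝ) =
      Algebra.adjoin ℝ {g : K → ℝ | ∃ w : H, ∀ x : K, g x = ⟪w, (x : H)⟫} := by
  rw [innerPolynomials, AlgHom.map_adjoin]
  congr 1
  ext g
  constructor
  · rintro ⟨g, hg, rfl⟩
    exact hg
  · rintro ⟨w, hw⟩
    exact ⟨⟨fun x => ⟪w, (x : H)⟫, by fun_prop⟩, ⟨w, fun _ => rfl⟩, funext hw |>.symm⟩

theorem innerPolynomials_separatesPoints (K : Set H) : (innerPolynomials K).SeparatesPoints := by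
  intro x y hxy
  refine ⟨_, ⟨⟨fun z => ⟪(x : H) - y, (z : H)⟫, by fun_prop⟩,
    Algebra.subset_adjoin ⟨(x : H) - y, fun _ => rfl⟩, rfl⟩, fun h => hxy ?_⟩
  have : ⟪(x : H) - y, (x : H) - y⟫ = 0 := by
    rw [inner_sub_right]
    exact sub_eq_zero.2 h
  exact Subtype.ext (sub_eq_zero.1 (inner_self_eq_zero.1 this))

theorem dense_innerPolynomials (K : Set H) [CompactSpace K] :
    Dense (innerPolynomials K : Set C(K, ℝ)) := by
  rw [dense_iff_closure_eq, ← Subalgebra.topologicalClosure_coe,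
    ContinuousMap.subalgebra_topologicalClosure_eq_top_of_separatesPoints _
      (innerPolynomials_separatesPoints K), Algebra.coe_top]

end InnerPolynomials

theorem hilbert_valued_stone_weierstrass_general
    (H : Type*) [NormedAddCommGroup H] [InnerProductSpace ℝ H]
    (K : Set H) (hK : IsCompact K)
    (F : K → H) (hF : Continuous F) (ε : ℝ) (hε : 0 < ε) :
    ∃ (N : ℕ) (v : Fin N → H) (f : Fin N → (K → ℝ)),
      (∀ i, f i ∈ Algebra.adjoin ℝ {g : K → ℝ | ∃ w : H, ∀ x : K, g x = ⟪w, (x : H)⟫}) ∧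
      ∀ x : K, ‖F x - ∑ i, f i x • v i‖ < ε := by
  have : CompactSpace K := isCompact_iff_compactSpace.mp hK
  obtain ⟨N, g, v, hg, hnorm⟩ :=
    ContinuousMap.exists_sum_smul_const_near_of_dense (dense_innerPolynomials K) ⟨F, hF⟩ hε
  refine ⟨N, v, fun i => g i,
    fun i => map_coeFnAlgHom_innerPolynomials K ▸ ⟨g i, hg i, rfl⟩, fun x => ?_⟩
  calc ‖F x - ∑ i, g i x • v i‖
      = ‖(⟨F, hF⟩ - ∑ i, g i • ContinuousMap.const K (v i) : C(K, H)) x‖ := by simp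
    _ ≤ _ := ContinuousMap.norm_coe_le_norm _ x
    _ < ε := hnorm

/-- Prenter's Stone–Weierstrass theorem for real separable Hilbert spaces (Theorem 1 of the
paper): a continuous map `F : K → H` on a compact set `K ⊆ H` can be uniformly approximated
within `ε` by an `H`-valued polynomial `x ↦ ∑ i, f i x • v i`, where each scalar coefficient
function `f i` is a finite real linear combination of finite products of inner-product
functionals `x ↦ ⟪w, x⟫`. -/
theorem hilbert_valued_stone_weierstrass
    (H : Type*) [NormedAddCommGroup H] [InnerProductSpace ℝ H] [CompleteSpace H]
    [TopologicalSpace.SeparableSpace H]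
    (K : Set H) (hK : IsCompact K)
    (F : K → H) (hF : Continuous F) (ε : ℝ) (hε : 0 < ε) :
    ∃ (N : ℕ) (v : Fin N → H) (f : Fin N → (K → ℝ)),
      (∀ i, f i ∈ Algebra.adjoin ℝ {g : K → ℝ | ∃ w : H, ∀ x : K, g x = ⟪w, (x : H)⟫}) ∧
      ∀ x : K, ‖F x - ∑ i, f i x • v i‖ < ε :=
  hilbert_valued_stone_weierstrass_general H K hK F hF ε hε
end

section
/- In the real vector space V = ℝ² ⊗ (ℝ² ⊗ ℝ²) (with its canonical topology as a finite-dimensional real vector space), the set of tensors of rank at most 2, namely S = { u ∈ V | ∃ a₁ b₁ c₁ a₂ b₂ c₂ ∈ ℝ², u = a₁ ⊗ (b₁ ⊗ c₁) + a₂ ⊗ (b₂ ⊗ c₂) }, is not a closed subset of V. -/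
open scoped TensorProduct
open Filter

noncomputable section DeSilvaLim

private def proj2 (i : Fin 2) : (Fin 2 → ℝ) →ₗ[ℝ] ℝ := LinearMap.proj i

private def φ2 (j k : Fin 2) : ((Fin 2 → ℝ) ⊗[ℝ] (Fin 2 → ℝ)) →ₗ[ℝ] ℝ :=
  TensorProduct.lift ((LinearMap.mul ℝ ℝ).compl₁₂ (proj2 j) (proj2 k))

private def φ (i j k : Fin 2) :
    ((Fin 2 → ℝ) ⊗[ℝ] ((Fin 2 → ℝ) ⊗[ℝ] (Fin 2 → ℝ))) →ₗ[ℝ] ℝ :=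
  TensorProduct.lift ((LinearMap.mul ℝ ℝ).compl₁₂ (proj2 i) (φ2 j k))

private lemma φ_tmul (i j k : Fin 2) (a b c : Fin 2 → ℝ) :
    φ i j k (a ⊗ₜ[ℝ] (b ⊗ₜ[ℝ] c)) = a i * (b j * c k) := by
  simp [φ, φ2, proj2]

/-- The de Silva–Lim tensor `a⊗a⊗b + a⊗b⊗a + b⊗a⊗a` has rank 3: it is not a sum of two
simple tensors. -/
private lemma T_not_rank_two :
    ¬ ∃ x y z u v w : Fin 2 → ℝ,
      (![1,0] : Fin 2 → ℝ) ⊗ₜ[ℝ] ((![1,0] : Fin 2 → ℝ) ⊗ₜ[ℝ] (![0,1] : Fin 2 → ℝ))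
        + (![1,0] : Fin 2 → ℝ) ⊗ₜ[ℝ] ((![0,1] : Fin 2 → ℝ) ⊗ₜ[ℝ] (![1,0] : Fin 2 → ℝ))
        + (![0,1] : Fin 2 → ℝ) ⊗ₜ[ℝ] ((![1,0] : Fin 2 → ℝ) ⊗ₜ[ℝ] (![1,0] : Fin 2 → ℝ))
      = x ⊗ₜ[ℝ] (y ⊗ₜ[ℝ] z) + u ⊗ₜ[ℝ] (v ⊗ₜ[ℝ] w) := by
  rintro ⟨x, y, z, u, v, w, h⟩
  have h000 := congrArg (φ 0 0 0) h
  have h001 := congrArg (φ 0 0 1) h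
  have h010 := congrArg (φ 0 1 0) h
  have h011 := congrArg (φ 0 1 1) h
  have h100 := congrArg (φ 1 0 0) h
  have h101 := congrArg (φ 1 0 1) h
  have h110 := congrArg (φ 1 1 0) h
  have h111 := congrArg (φ 1 1 1) h
  simp only [map_add, φ_tmul, Matrix.cons_val_zero, Matrix.cons_val_one, Matrix.head_cons,
    mul_one, mul_zero, one_mul, zero_mul, add_zero, zero_add] at h000 h001 h010 h011 h100 h101 h110 h111
  set D : ℝ := (y 0 * v 1 - y 1 * v 0) * (z 0 * w 1 - z 1 * w 0) with hD_def
  have F1 : x 0 * u 0 * D = -1 := by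
    linear_combination (-(x 0 * y 1 * z 1 + u 0 * v 1 * w 1)) * h000
      + (x 0 * y 1 * z 0 + u 0 * v 1 * w 0) * h001 + h010
  have F2 : x 1 * u 1 * D = 0 := by
    linear_combination (-(x 1 * y 1 * z 1 + u 1 * v 1 * w 1)) * h100
      - h111 + (x 1 * y 0 * z 1 + u 1 * v 0 * w 1) * h110
  have F3 : (x 0 + x 1) * (u 0 + u 1) * D = -1 := by
    linear_combination (-(x 0 * y 1 * z 1 + u 0 * v 1 * w 1 + x 1 * y 1 * z 1 + u 1 * v 1 * w 1)) * (h000 + h100)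
      - (h011 + h111)
      + (x 0 * y 1 * z 0 + u 0 * v 1 * w 0 + x 1 * y 1 * z 0 + u 1 * v 1 * w 0) * (h001 + h101)
      + (h010 + h110)
  have F4 : (x 0 * u 1 + x 1 * u 0) * D = 0 := by linear_combination F3 - F1 - F2
  have hD : D ≠ 0 := by
    intro h0
    rw [h0, mul_zero] at F1
    norm_num at F1
  have hx0 : x 0 ≠ 0 := by
    intro h0
    rw [h0, zero_mul, zero_mul] at F1
    norm_num at F1
  have hu0 : u 0 ≠ 0 := by
    intro h0
    rw [h0, mul_zero, zero_mul] at F1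
    norm_num at F1
  have h11 : x 1 * u 1 = 0 := by
    rcases mul_eq_zero.mp F2 with h' | h'
    · exact h'
    · exact absurd h' hD
  have hmix : x 0 * u 1 + x 1 * u 0 = 0 := by
    rcases mul_eq_zero.mp F4 with h' | h'
    · exact h'
    · exact absurd h' hD
  have hboth : x 1 = 0 ∧ u 1 = 0 := by
    rcases mul_eq_zero.mp h11 with h' | h'
    · refine ⟨h', ?_⟩
      have : x 0 * u 1 = 0 := by linear_combination hmix - u 0 * h'
      rcases mul_eq_zero.mp this with h'' | h''
      · exact absurd h'' hx0
      · exact h''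
    · refine ⟨?_, h'⟩
      have : x 1 * u 0 = 0 := by linear_combination hmix - x 0 * h'
      rcases mul_eq_zero.mp this with h'' | h''
      · exact h''
      · exact absurd h'' hu0
  rw [hboth.1, hboth.2] at h100
  norm_num at h100

/-- Key algebraic identity for the approximating sequence. -/
private lemma key_identity (a b : Fin 2 → ℝ) (n c : ℝ) :
    ((n • (a + c • b)) ⊗ₜ[ℝ] ((a + c • b) ⊗ₜ[ℝ] (a + c • b))) + (((-n) • a) ⊗ₜ[ℝ] (a ⊗ₜ[ℝ] a))
    = (n*c) • (a ⊗ₜ[ℝ] (a ⊗ₜ[ℝ] b) + a ⊗ₜ[ℝ] (b ⊗ₜ[ℝ] a) + b ⊗ₜ[ℝ] (a ⊗ₜ[ℝ] a))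
      + ((n*c)*c) • (a ⊗ₜ[ℝ] (b ⊗ₜ[ℝ] b) + b ⊗ₜ[ℝ] (a ⊗ₜ[ℝ] b) + b ⊗ₜ[ℝ] (b ⊗ₜ[ℝ] a))
      + (((n*c)*c)*c) • (b ⊗ₜ[ℝ] (b ⊗ₜ[ℝ] b)) := by
  simp only [TensorProduct.tmul_add, TensorProduct.add_tmul, ← TensorProduct.smul_tmul',
    TensorProduct.tmul_smul, smul_add, smul_smul]
  module

end DeSilvaLim

/-- De Silva–Lim ill-posedness: in the space of order-3 tensors `ℝ² ⊗ (ℝ² ⊗ ℝ²)` (with its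
canonical topology as a finite-dimensional real vector space, transported along any linear
equivalence `e` with `ℝ^8`), the set of tensors of rank at most 2 is not closed. -/
theorem rank_two_tensors_not_closed
    (e : ((Fin 2 → ℝ) ⊗[ℝ] ((Fin 2 → ℝ) ⊗[ℝ] (Fin 2 → ℝ))) ≃ₗ[ℝ]
      EuclideanSpace ℝ (Fin 8)) :
    ¬ IsClosed (e ''
      {u : (Fin 2 → ℝ) ⊗[ℝ] ((Fin 2 → ℝ) ⊗[ℝ] (Fin 2 → ℝ)) |
        ∃ a₁ b₁ c₁ a₂ b₂ c₂ : Fin 2 → ℝ,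
          u = a₁ ⊗ₜ[ℝ] (b₁ ⊗ₜ[ℝ] c₁) + a₂ ⊗ₜ[ℝ] (b₂ ⊗ₜ[ℝ] c₂)}) := by
  intro hclosed
  set a : Fin 2 → ℝ := ![1,0] with ha
  set b : Fin 2 → ℝ := ![0,1] with hb
  set T : (Fin 2 → ℝ) ⊗[ℝ] ((Fin 2 → ℝ) ⊗[ℝ] (Fin 2 → ℝ)) :=
    a ⊗ₜ[ℝ] (a ⊗ₜ[ℝ] b) + a ⊗ₜ[ℝ] (b ⊗ₜ[ℝ] a) + b ⊗ₜ[ℝ] (a ⊗ₜ[ℝ] a) with hT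
  set R : (Fin 2 → ℝ) ⊗[ℝ] ((Fin 2 → ℝ) ⊗[ℝ] (Fin 2 → ℝ)) :=
    a ⊗ₜ[ℝ] (b ⊗ₜ[ℝ] b) + b ⊗ₜ[ℝ] (a ⊗ₜ[ℝ] b) + b ⊗ₜ[ℝ] (b ⊗ₜ[ℝ] a) with hR
  set Q : (Fin 2 → ℝ) ⊗[ℝ] ((Fin 2 → ℝ) ⊗[ℝ] (Fin 2 → ℝ)) := b ⊗ₜ[ℝ] (b ⊗ₜ[ℝ] b) with hQ
  set S : Set ((Fin 2 → ℝ) ⊗[ℝ] ((Fin 2 → ℝ) ⊗[ℝ] (Fin 2 → ℝ))) :=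
    {u | ∃ a₁ b₁ c₁ a₂ b₂ c₂ : Fin 2 → ℝ,
      u = a₁ ⊗ₜ[ℝ] (b₁ ⊗ₜ[ℝ] c₁) + a₂ ⊗ₜ[ℝ] (b₂ ⊗ₜ[ℝ] c₂)} with hS
  -- the approximating sequence
  set u : ℕ → (Fin 2 → ℝ) ⊗[ℝ] ((Fin 2 → ℝ) ⊗[ℝ] (Fin 2 → ℝ)) := fun n =>
    (((n : ℝ)) • (a + ((n : ℝ))⁻¹ • b)) ⊗ₜ[ℝ]
      ((a + ((n : ℝ))⁻¹ • b) ⊗ₜ[ℝ] (a + ((n : ℝ))⁻¹ • b))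
    + (((-(n : ℝ))) • a) ⊗ₜ[ℝ] (a ⊗ₜ[ℝ] a) with hu
  have humem : ∀ n : ℕ, u n ∈ S := fun n =>
    ⟨((n : ℝ)) • (a + ((n : ℝ))⁻¹ • b), a + ((n : ℝ))⁻¹ • b, a + ((n : ℝ))⁻¹ • b,
      ((-(n : ℝ))) • a, a, a, rfl⟩
  have hun : ∀ n : ℕ, 1 ≤ n →
      e (u n) = e T + ((n : ℝ))⁻¹ • e R + (((n : ℝ))⁻¹ * ((n : ℝ))⁻¹) • e Q := by
    intro n hn
    have hne : (n : ℝ) ≠ 0 := Nat.cast_ne_zero.mpr (by omega)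
    have hnc : (n : ℝ) * ((n : ℝ))⁻¹ = 1 := mul_inv_cancel₀ hne
    have := key_identity a b (n : ℝ) ((n : ℝ))⁻¹
    rw [hnc, one_smul, one_mul] at this
    have hueq : u n = T + ((n : ℝ))⁻¹ • R + (((n : ℝ))⁻¹ * ((n : ℝ))⁻¹) • Q := this
    rw [hueq, e.map_add, e.map_add, e.map_smul, e.map_smul]
  have h0 : Tendsto (fun n : ℕ => ((n : ℝ))⁻¹) atTop (nhds 0) :=
    tendsto_inv_atTop_zero.comp tendsto_natCast_atTop_atTop
  have hg : Tendsto
      (fun n : ℕ => e T + ((n : ℝ))⁻¹ • e R + (((n : ℝ))⁻¹ * ((n : ℝ))⁻¹) • e Q)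
      atTop (nhds (e T)) := by
    have := ((tendsto_const_nhds : Filter.Tendsto (fun _ : ℕ => e T) atTop (nhds (e T)))).add
      ((h0.smul_const (e R)).add ((h0.mul h0).smul_const (e Q)))
    simpa [add_assoc] using this
  have htends : Tendsto (fun n : ℕ => e (u n)) atTop (nhds (e T)) := by
    refine hg.congr' ?_
    filter_upwards [eventually_ge_atTop 1] with n hn
    exact (hun n hn).symm
  have hclo : e T ∈ closure (e '' S) :=
    mem_closure_of_tendsto htends (Eventually.of_forall fun n => ⟨u n, humem n, rfl⟩)
  rw [hclosed.closure_eq] at hclo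
  obtain ⟨t, htS, hte⟩ := hclo
  have : t = T := e.injective hte
  rw [this] at htS
  exact T_not_rank_two htS
end
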